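/- Let (M, h, ∇) be a quasi-statistical manifold such that ∇ is flat, with h symmetric (respectively skew-symmetric). Then (T*M, h̃_+, ∇̃) (respectively (T*M, h̃_−, ∇̃)) is a quasi-statistical manifold, where h̃_± are the Patterson-Walker tensors on T*M and ∇̃ is the pull-back connection of ∇̂ on T*M; that is, d^{∇̃} h̃_± = 0. -/

import Mathlib

/-!
Expand everything in the adapted frame `X_i^H, ∂/∂y_j`. In `(∇̃_U h̃_ε)(V, W)` the derivatives of
the components of `V, W` cancel, so it is algebraic in `U, V, W`; in the torsion `T^{∇̃}(U, V)`
they cancel against the bracket `[U, V]`, up to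
`X_i^H (y_k Γ^k_{jl}) − X_j^H (y_k Γ^k_{il}) = y_r R^r_{ijl}`, which vanishes since `∇` is flat.
What is left of `d^{∇̃} h̃_ε (U, V, W)` is `ε ∑ (u^i v^a − v^i u^a) w_b C_{abi}`, where
`∇̃_{X_i^H} ∂/∂y_j = C_{ijr} ∂/∂y_r`. For `h = σ hᵀ` one has
`C_{ijr} = σ h^{ja} (Γ^k_{ia} h_{kr} − ∂_i h_{ar})`, and `d^∇ h = 0` says exactly that the bracket
is symmetric in `i, r`; hence `C_{ijr} = C_{rji}` and this last term vanishes as well.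
-/

namespace GQSCoord

open scoped BigOperators

variable {n : ℕ}

/-- Points of the manifold `M` in a fixed local coordinate system `{x^1,...,x^n}`. -/
abbrev Pt (n : ℕ) := Fin n → ℝ
/-- Points of the total space of `T*M` (resp. `TM`) in the induced coordinates
`{x̃^i, y_i}` (resp. `{x̃^i, y^i}`). -/
abbrev Tot (n : ℕ) := (Fin n → ℝ) × (Fin n → ℝ)

/-- The partial derivative `∂f/∂x^i`. -/
noncomputable def pd (i : Fin n) (f : Pt n → ℝ) (x : Pt n) : ℝ :=
  fderiv ℝ f x (Pi.single i 1)

/-- The action of a vector field `U` on the total space on a function `f`. -/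
noncomputable def act (U : Tot n → Tot n) (f : Tot n → ℝ) (z : Tot n) : ℝ :=
  fderiv ℝ f z (U z)

/-- The Lie bracket of vector fields on the total space. -/
noncomputable def lie (U V : Tot n → Tot n) (z : Tot n) : Tot n :=
  fderiv ℝ V z (U z) - fderiv ℝ U z (V z)

/-- Smooth functions. -/
def Smooth {E F : Type*} [NormedAddCommGroup E] [NormedSpace ℝ E]
    [NormedAddCommGroup F] [NormedSpace ℝ F] (f : E → F) : Prop :=
  ContDiff ℝ (⊤ : ℕ∞) f

variable (Γ : Pt n → Fin n → Fin n → Fin n → ℝ) (h hinv : Pt n → Fin n → Fin n → ℝ)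

/- We encode an affine connection `∇` on `M` by its Christoffel symbols,
`Γ x i j k = Γ^k_{ij}(x)`, i.e. `∇_{∂_i} ∂_j = Γ^k_{ij} ∂_k`, a `(0,2)`-tensor field `h` by
its components `h x i j = h_{ij}(x)`, and its (two-sided pointwise) inverse by
`hinv x i j = h^{ij}(x)`. -/

/-- `(∇_{∂_i} h)_{jk}`. -/
noncomputable def covh (x : Pt n) (i j k : Fin n) : ℝ :=
  pd i (fun x' => h x' j k) x - ∑ l, Γ x i j l * h x l k - ∑ l, Γ x i k l * h x j l

/-- `(d^∇ h)(∂_i, ∂_j, ∂_k)`. -/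
noncomputable def dnabla (x : Pt n) (i j k : Fin n) : ℝ :=
  covh Γ h x i j k - covh Γ h x j i k + ∑ l, (Γ x i j l - Γ x j i l) * h x l k

/-- The curvature `R^l_{ijk}`, with `R^∇(∂_i, ∂_j)∂_k = R^l_{ijk} ∂_l`. -/
noncomputable def curv (x : Pt n) (i j k l : Fin n) : ℝ :=
  pd i (fun x' => Γ x' j k l) x - pd j (fun x' => Γ x' i k l) x
    + ∑ r, Γ x j k r * Γ x i r l - ∑ r, Γ x i k r * Γ x j r l

/-! ### The cotangent bundle `T*M` -/

/-- The coefficient `y_k Γ^k_{il}` of the horizontal lift on `T*M`. -/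
def cstar (z : Tot n) (i l : Fin n) : ℝ := ∑ k, z.2 k * Γ z.1 i l k

/-- The horizontal lift `X_i^H = ∂/∂x̃^i + y_k Γ^k_{il} ∂/∂y_l` on `T*M`. -/
def XHstar (i : Fin n) (z : Tot n) : Tot n := (Pi.single i 1, fun l => cstar Γ z i l)

/-- The vertical frame field `∂/∂y_j`. -/
def VV (j : Fin n) (z : Tot n) : Tot n := (0, Pi.single j 1)

/-- The horizontal frame components of a tangent vector at a point of the total space. -/
def hcv (v : Tot n) (i : Fin n) : ℝ := v.1 i

/-- The vertical frame components of a tangent vector `v` at `z ∈ T*M`. -/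
def vcvstar (z v : Tot n) (l : Fin n) : ℝ := v.2 l - ∑ i, v.1 i * cstar Γ z i l

/-- The coefficients of `∇̃_{X_i^H} ∂/∂y_j = (∂h^{jk}/∂x^i + h^{jl}Γ^k_{il}) h_{rk} ∂/∂y_r`. -/
noncomputable def Cstar (x : Pt n) (i j r : Fin n) : ℝ :=
  ∑ k, (pd i (fun x' => hinv x' j k) x + ∑ l, hinv x j l * Γ x i l k) * h x r k

/-- The pull-back connection `∇̃` of `∇̂` on `T*M`, defined on arbitrary vector fields: in the
adapted frame it is given by `∇̃_{X_i^H} X_j^H = Γ^k_{ij} X_k^H`,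
`∇̃_{X_i^H} ∂/∂y_j = (∂h^{jk}/∂x^i + h^{jl}Γ^k_{il}) h_{rk} ∂/∂y_r`,
`∇̃_{∂/∂y_j} X_i^H = 0` and `∇̃_{∂/∂y_i} ∂/∂y_j = 0`. -/
noncomputable def tconnStar (U W : Tot n → Tot n) (z : Tot n) : Tot n :=
  (∑ i, act U (fun w => hcv (W w) i) z • XHstar Γ i z)
  + (∑ l, act U (fun w => vcvstar Γ w (W w) l) z • VV l z)
  + (∑ i, ∑ j, (hcv (U z) i * hcv (W z) j) • (∑ k, Γ z.1 i j k • XHstar Γ k z))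
  + (∑ i, ∑ j, (hcv (U z) i * vcvstar Γ z (W z) j) •
      (∑ r, Cstar Γ h hinv z.1 i j r • VV r z))

/-- The Sasaki tensor `h^{S*}` on `T*M`, determined by `h^{S*}(X^H, Y^H) = h(X,Y)`,
`h^{S*}(α^V, β^V) = h(h⁻¹α, h⁻¹β)` and `h^{S*}(α^V, Y^H) = h^{S*}(X^H, β^V) = 0`. -/
noncomputable def sasakiStar (U W : Tot n → Tot n) (z : Tot n) : ℝ :=
  (∑ i, ∑ j, hcv (U z) i * hcv (W z) j * h z.1 i j)
  + ∑ i, ∑ j, vcvstar Γ z (U z) i * vcvstar Γ z (W z) j *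
      (∑ r, ∑ s, hinv z.1 i r * hinv z.1 j s * h z.1 r s)

/-- The (generalized) Patterson-Walker tensor `h̃_ε` on `T*M` (`ε = 1` gives `h̃_+`, `ε = -1`
gives `h̃_-`), determined by `h̃_ε(X^H, Y^H) = 0`, `h̃_ε(α^V, β^V) = 0`,
`h̃_ε(α^V, X^H) = α(X)` and `h̃_ε(X^H, α^V) = ε α(X)`. -/
def pwStar (ε : ℝ) (U W : Tot n → Tot n) (z : Tot n) : ℝ :=
  (∑ i, vcvstar Γ z (U z) i * hcv (W z) i) + ε * ∑ i, hcv (U z) i * vcvstar Γ z (W z) i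

/-! ### The tangent bundle `TM` -/

/-- The coefficient `y^k Γ^l_{ik}` of the horizontal lift on `TM`. -/
def ctan (z : Tot n) (i l : Fin n) : ℝ := ∑ k, z.2 k * Γ z.1 i k l

/-- The horizontal lift `X_i^H = ∂/∂x̃^i − y^k Γ^l_{ik} ∂/∂y^l` on `TM`. -/
def XHtan (i : Fin n) (z : Tot n) : Tot n := (Pi.single i 1, fun l => - ctan Γ z i l)

/-- The vertical frame components of a tangent vector `v` at `z ∈ TM`. -/
def vcvtan (z v : Tot n) (l : Fin n) : ℝ := v.2 l + ∑ i, v.1 i * ctan Γ z i l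

/-- The connection `∇̃̃` on `TM`, defined on arbitrary vector fields: in the adapted frame it
is given by `∇̃̃_{X_i^H} X_j^H = Γ^k_{ij} X_k^H`, `∇̃̃_{X_i^H} ∂/∂y^j = Γ^k_{ij} ∂/∂y^k`,
`∇̃̃_{∂/∂y^j} X_i^H = 0` and `∇̃̃_{∂/∂y^i} ∂/∂y^j = 0`. -/
noncomputable def tconnTan (U W : Tot n → Tot n) (z : Tot n) : Tot n :=
  (∑ i, act U (fun w => hcv (W w) i) z • XHtan Γ i z)
  + (∑ l, act U (fun w => vcvtan Γ w (W w) l) z • VV l z)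
  + (∑ i, ∑ j, (hcv (U z) i * hcv (W z) j) • (∑ k, Γ z.1 i j k • XHtan Γ k z))
  + (∑ i, ∑ j, (hcv (U z) i * vcvtan Γ z (W z) j) • (∑ k, Γ z.1 i j k • VV k z))

/-- The Sasaki tensor `h^S` on `TM`, determined by `h^S(X^H, Y^H) = h(X,Y)`,
`h^S(X^V, Y^V) = h(X,Y)` and `h^S(X^H, Y^V) = h^S(X^V, Y^H) = 0`. -/
noncomputable def sasakiTan (U W : Tot n → Tot n) (z : Tot n) : ℝ :=
  (∑ i, ∑ j, hcv (U z) i * hcv (W z) j * h z.1 i j)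
  + ∑ i, ∑ j, vcvtan Γ z (U z) i * vcvtan Γ z (W z) j * h z.1 i j

/-- The horizontal lift `h^H` of `h` to `TM`, determined by `h^H(X^H, Y^H) = 0`,
`h^H(X^V, Y^V) = 0` and `h^H(X^H, Y^V) = h^H(X^V, Y^H) = h(X,Y)`. -/
noncomputable def horTan (U W : Tot n → Tot n) (z : Tot n) : ℝ :=
  (∑ i, ∑ j, hcv (U z) i * vcvtan Γ z (W z) j * h z.1 i j)
  + ∑ i, ∑ j, vcvtan Γ z (U z) i * hcv (W z) j * h z.1 i j

/-! ### `d^D g` and curvature for connections on the total space -/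

/-- `(d^D g)(U,V,W) = (D_U g)(V,W) − (D_V g)(U,W) + g(T^D(U,V), W)`. -/
noncomputable def dTensor (conn : (Tot n → Tot n) → (Tot n → Tot n) → Tot n → Tot n)
    (g : (Tot n → Tot n) → (Tot n → Tot n) → Tot n → ℝ)
    (U V W : Tot n → Tot n) (z : Tot n) : ℝ :=
  (act U (g V W) z - g (fun w => conn U V w) W z - g V (fun w => conn U W w) z)
  - (act V (g U W) z - g (fun w => conn V U w) W z - g U (fun w => conn V W w) z)
  + g (fun w => conn U V w - conn V U w - lie U V w) W z

/-- The curvature operator `R^D(U,V)W` of a connection on the total space. -/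
noncomputable def curvConn (conn : (Tot n → Tot n) → (Tot n → Tot n) → Tot n → Tot n)
    (U V W : Tot n → Tot n) (z : Tot n) : Tot n :=
  conn U (fun w => conn V W w) z - conn V (fun w => conn U W w) z - conn (lie U V) W z

theorem Smooth.differentiableAt {E F : Type*} [NormedAddCommGroup E] [NormedSpace ℝ E]
    [NormedAddCommGroup F] [NormedSpace ℝ F] {f : E → F} (hf : Smooth f) {x : E} :
    DifferentiableAt ℝ f x :=
  (ContDiff.differentiable hf (by simp)).differentiableAt

theorem act_fst_apply {U V : Tot n → Tot n} {z : Tot n} (hV : DifferentiableAt ℝ V z)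
    (k : Fin n) : act U (fun w => (V w).1 k) z = (fderiv ℝ V z (U z)).1 k := by
  rw [act, fderiv_apply (Φ := fun w => (V w).1) hV.fst k, fderiv.fst hV]
  rfl

theorem act_snd_apply {U V : Tot n → Tot n} {z : Tot n} (hV : DifferentiableAt ℝ V z)
    (k : Fin n) : act U (fun w => (V w).2 k) z = (fderiv ℝ V z (U z)).2 k := by
  rw [act, fderiv_apply (Φ := fun w => (V w).2) hV.snd k, fderiv.snd hV]
  rfl

@[fun_prop]
theorem differentiableAt_cstar {z : Tot n}
    (hΓ : ∀ i j k, DifferentiableAt ℝ (fun x => Γ x i j k) z.1) (i l : Fin n) :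
    DifferentiableAt ℝ (fun w => cstar Γ w i l) z := by
  unfold cstar
  fun_prop

@[fun_prop]
theorem differentiableAt_vcvstar {V : Tot n → Tot n} {z : Tot n}
    (hΓ : ∀ i j k, DifferentiableAt ℝ (fun x => Γ x i j k) z.1) (hV : DifferentiableAt ℝ V z)
    (l : Fin n) : DifferentiableAt ℝ (fun w => vcvstar Γ w (V w) l) z := by
  unfold vcvstar
  fun_prop

theorem vcvstar_add (z a b : Tot n) :
    vcvstar Γ z (a + b) = vcvstar Γ z a + vcvstar Γ z b := by
  ext l
  simp only [vcvstar, Prod.fst_add, Prod.snd_add, Pi.add_apply, add_mul, Finset.sum_add_distrib]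
  ring

theorem vcvstar_sub (z a b : Tot n) :
    vcvstar Γ z (a - b) = vcvstar Γ z a - vcvstar Γ z b := by
  ext l
  simp only [vcvstar, Prod.fst_sub, Prod.snd_sub, Pi.sub_apply, sub_mul, Finset.sum_sub_distrib]
  ring

theorem vcvstar_smul (z : Tot n) (c : ℝ) (a : Tot n) :
    vcvstar Γ z (c • a) = c • vcvstar Γ z a := by
  ext l
  simp only [vcvstar, Prod.smul_fst, Prod.smul_snd, Pi.smul_apply, smul_eq_mul, mul_sub,
    Finset.mul_sum, mul_assoc]

theorem vcvstar_sum {ι : Type*} (z : Tot n) (s : Finset ι) (f : ι → Tot n) :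
    vcvstar Γ z (∑ i ∈ s, f i) = ∑ i ∈ s, vcvstar Γ z (f i) := by
  ext l
  simp only [vcvstar, Prod.fst_sum, Prod.snd_sum, Finset.sum_apply, Finset.sum_mul,
    Finset.sum_sub_distrib]
  rw [Finset.sum_comm]

theorem vcvstar_XHstar (z : Tot n) (i : Fin n) : vcvstar Γ z (XHstar Γ i z) = 0 := by
  ext l
  simp [vcvstar, XHstar, Pi.single_apply]

theorem vcvstar_VV (z : Tot n) (k : Fin n) : vcvstar Γ z (VV k z) = Pi.single k 1 := by
  ext l
  simp [vcvstar, VV]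

theorem eq_sum_XHstar_add_sum_VV (z v : Tot n) :
    v = ∑ j, hcv v j • XHstar Γ j z + ∑ k, vcvstar Γ z v k • VV k z := by
  ext l
  · simp [hcv, XHstar, VV, Prod.fst_sum, Finset.sum_apply, Pi.single_apply]
  · simp [hcv, XHstar, VV, vcvstar, Prod.snd_sum, Finset.sum_apply, Pi.single_apply]

theorem act_eq_sum_frame (U : Tot n → Tot n) (f : Tot n → ℝ) (z : Tot n) :
    act U f z = ∑ j, hcv (U z) j * act (XHstar Γ j) f z
      + ∑ k, vcvstar Γ z (U z) k * act (VV k) f z := by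
  conv_lhs => rw [act, eq_sum_XHstar_add_sum_VV Γ z (U z)]
  simp only [map_add, map_sum, map_smul, smul_eq_mul, act]

def contract (T : Fin n → Fin n → Fin n → ℝ) (u w : Fin n → ℝ) : Fin n → ℝ :=
  fun k => ∑ a, ∑ b, u a * w b * T a b k

noncomputable def horDeriv (U W : Tot n → Tot n) (z : Tot n) : Fin n → ℝ :=
  fun k => act U (fun w => hcv (W w) k) z

noncomputable def vertDeriv (U W : Tot n → Tot n) (z : Tot n) : Fin n → ℝ :=
  fun l => act U (fun w => vcvstar Γ w (W w) l) z

theorem hcv_tconnStar (U W : Tot n → Tot n) (z : Tot n) :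
    hcv (tconnStar Γ h hinv U W z)
      = horDeriv U W z + contract (Γ z.1) (hcv (U z)) (hcv (W z)) := by
  ext k
  simp [tconnStar, hcv, XHstar, VV, Prod.fst_sum, Finset.sum_apply, Pi.single_apply,
    contract, horDeriv]

theorem vcvstar_tconnStar (U W : Tot n → Tot n) (z : Tot n) :
    vcvstar Γ z (tconnStar Γ h hinv U W z)
      = vertDeriv Γ U W z + contract (Cstar Γ h hinv z.1) (hcv (U z)) (vcvstar Γ z (W z)) := by
  ext l
  simp [tconnStar, vcvstar_add, vcvstar_sum, vcvstar_smul, vcvstar_XHstar, vcvstar_VV,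
    Finset.sum_apply, Pi.single_apply, contract, vertDeriv]

theorem pwStar_eq_dotProduct (ε : ℝ) (V W : Tot n → Tot n) (z : Tot n) :
    pwStar Γ ε V W z
      = vcvstar Γ z (V z) ⬝ᵥ hcv (W z) + ε * (hcv (V z) ⬝ᵥ vcvstar Γ z (W z)) := rfl

theorem act_pwStar (ε : ℝ) {U V W : Tot n → Tot n} {z : Tot n}
    (hΓ : ∀ i j k, DifferentiableAt ℝ (fun x => Γ x i j k) z.1)
    (hV : DifferentiableAt ℝ V z) (hW : DifferentiableAt ℝ W z) :
    act U (pwStar Γ ε V W) z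
      = vertDeriv Γ U V z ⬝ᵥ hcv (W z) + vcvstar Γ z (V z) ⬝ᵥ horDeriv U W z
        + ε * (horDeriv U V z ⬝ᵥ vcvstar Γ z (W z) + hcv (V z) ⬝ᵥ vertDeriv Γ U W z) := by
  have hpw : pwStar Γ ε V W = fun w => (∑ i, vcvstar Γ w (V w) i * (W w).1 i)
      + ε * ∑ i, (V w).1 i * vcvstar Γ w (W w) i := rfl
  simp only [hpw, act, horDeriv, vertDeriv, hcv, dotProduct]
  rw [fderiv_fun_add (by fun_prop) (by fun_prop), fderiv_const_mul (by fun_prop),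
    fderiv_fun_sum (fun i _ => by fun_prop), fderiv_fun_sum (fun i _ => by fun_prop)]
  simp (disch := fun_prop) only [fderiv_fun_mul, add_apply, smul_apply, sum_apply, smul_eq_mul,
    Finset.sum_add_distrib, mul_comm ((W z).1 _), mul_comm (vcvstar Γ z (W z) _)]
  ring

theorem covDeriv_pwStar (ε : ℝ) {U V W : Tot n → Tot n} {z : Tot n}
    (hΓ : ∀ i j k, DifferentiableAt ℝ (fun x => Γ x i j k) z.1)
    (hV : DifferentiableAt ℝ V z) (hW : DifferentiableAt ℝ W z) :
    act U (pwStar Γ ε V W) z - pwStar Γ ε (fun w => tconnStar Γ h hinv U V w) W z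
        - pwStar Γ ε V (fun w => tconnStar Γ h hinv U W w) z
      = -(contract (Cstar Γ h hinv z.1) (hcv (U z)) (vcvstar Γ z (V z)) ⬝ᵥ hcv (W z))
        - vcvstar Γ z (V z) ⬝ᵥ contract (Γ z.1) (hcv (U z)) (hcv (W z))
        - ε * (contract (Γ z.1) (hcv (U z)) (hcv (V z)) ⬝ᵥ vcvstar Γ z (W z)
          + hcv (V z) ⬝ᵥ contract (Cstar Γ h hinv z.1) (hcv (U z)) (vcvstar Γ z (W z))) := by
  rw [act_pwStar Γ ε hΓ hV hW, pwStar_eq_dotProduct, pwStar_eq_dotProduct, hcv_tconnStar,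
    vcvstar_tconnStar, hcv_tconnStar, vcvstar_tconnStar]
  simp only [add_dotProduct, dotProduct_add]
  ring

theorem act_cstar {z : Tot n} (hΓ : ∀ i j k, DifferentiableAt ℝ (fun x => Γ x i j k) z.1)
    (U : Tot n → Tot n) (i l : Fin n) :
    act U (fun w => cstar Γ w i l) z
      = ∑ r, ((U z).2 r * Γ z.1 i l r + z.2 r * fderiv ℝ (fun x => Γ x i l r) z.1 (U z).1) := by
  simp only [act, cstar]
  rw [fderiv_fun_sum (fun r _ => by fun_prop), sum_apply]
  refine Finset.sum_congr rfl fun r _ => ?_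
  rw [fderiv_fun_mul (by fun_prop) (by fun_prop)]
  have hbase : fderiv ℝ (fun w : Tot n => Γ w.1 i l r) z
      = (fderiv ℝ (fun x => Γ x i l r) z.1).comp (ContinuousLinearMap.fst ℝ _ _) :=
    ((hΓ i l r).hasFDerivAt.comp z hasFDerivAt_fst).fderiv
  have hfiber : fderiv ℝ (fun w : Tot n => w.2 r) z (U z) = (U z).2 r := by
    simpa [act] using act_snd_apply (U := U) (z := z) differentiableAt_id r
  simp only [add_apply, smul_apply, smul_eq_mul, hbase, hfiber]
  rw [ContinuousLinearMap.comp_apply, ContinuousLinearMap.coe_fst']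
  ring

theorem act_VV_cstar {z : Tot n} (hΓ : ∀ i j k, DifferentiableAt ℝ (fun x => Γ x i j k) z.1)
    (i l k : Fin n) : act (VV k) (fun w => cstar Γ w i l) z = Γ z.1 i l k := by
  simp [act_cstar Γ hΓ, VV, Pi.single_apply]

theorem act_XHstar_cstar {z : Tot n}
    (hΓ : ∀ i j k, DifferentiableAt ℝ (fun x => Γ x i j k) z.1) (i j l : Fin n) :
    act (XHstar Γ j) (fun w => cstar Γ w i l) z
      = ∑ r, (cstar Γ z j r * Γ z.1 i l r + z.2 r * pd j (fun x => Γ x i l r) z.1) := by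
  rw [act_cstar Γ hΓ]
  rfl

theorem sum_cstar_mul (z : Tot n) (i : Fin n) (g : Fin n → ℝ) :
    ∑ r, cstar Γ z i r * g r = ∑ k, z.2 k * ∑ r, g r * Γ z.1 i r k := by
  simp only [cstar, Finset.sum_mul, Finset.mul_sum]
  rw [Finset.sum_comm]
  exact Finset.sum_congr rfl fun _ _ => Finset.sum_congr rfl fun _ _ => by ring

theorem act_XHstar_cstar_sub_act_XHstar_cstar {z : Tot n}
    (hΓ : ∀ i j k, DifferentiableAt ℝ (fun x => Γ x i j k) z.1) (i j l : Fin n) :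
    act (XHstar Γ i) (fun w => cstar Γ w j l) z - act (XHstar Γ j) (fun w => cstar Γ w i l) z
      = ∑ r, z.2 r * curv Γ z.1 i j l r := by
  rw [act_XHstar_cstar Γ hΓ, act_XHstar_cstar Γ hΓ]
  simp only [Finset.sum_add_distrib, Finset.sum_sub_distrib, sum_cstar_mul, curv, mul_add,
    mul_sub]
  ring

theorem horDeriv_eq {U V : Tot n → Tot n} {z : Tot n} (hV : DifferentiableAt ℝ V z) :
    horDeriv U V z = hcv (fderiv ℝ V z (U z)) :=
  funext (act_fst_apply hV)

theorem vertDeriv_eq {U V : Tot n → Tot n} {z : Tot n}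
    (hΓ : ∀ i j k, DifferentiableAt ℝ (fun x => Γ x i j k) z.1) (hV : DifferentiableAt ℝ V z) :
    vertDeriv Γ U V z = vcvstar Γ z (fderiv ℝ V z (U z))
      - fun l => ∑ i, hcv (V z) i * act U (fun w => cstar Γ w i l) z := by
  ext l
  have hsplit : (fun w => vcvstar Γ w (V w) l)
      = fun w => (V w).2 l - ∑ i, (V w).1 i * cstar Γ w i l := rfl
  have hfst := act_fst_apply (U := U) hV
  have hsnd := act_snd_apply (U := U) hV
  simp only [act] at hfst hsnd
  simp only [vertDeriv, hsplit, act]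
  rw [fderiv_fun_sub (by fun_prop) (by fun_prop), fderiv_fun_sum (fun i _ => by fun_prop)]
  simp (disch := fun_prop) only [fderiv_fun_mul, sub_apply, sum_apply, add_apply, smul_apply,
    smul_eq_mul, Finset.sum_add_distrib, hfst, hsnd, vcvstar, hcv, Pi.sub_apply,
    mul_comm (cstar Γ z _ l)]
  ring

theorem hcv_lie {U V : Tot n → Tot n} {z : Tot n} (hU : DifferentiableAt ℝ U z)
    (hV : DifferentiableAt ℝ V z) : hcv (lie U V z) = horDeriv U V z - horDeriv V U z := by
  rw [horDeriv_eq hV, horDeriv_eq hU]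
  rfl

theorem sum_hcv_mul_act_cstar_sub {z : Tot n}
    (hΓ : ∀ i j k, DifferentiableAt ℝ (fun x => Γ x i j k) z.1) (U V : Tot n → Tot n)
    (l : Fin n) :
    ∑ i, (hcv (V z) i * act U (fun w => cstar Γ w i l) z
        - hcv (U z) i * act V (fun w => cstar Γ w i l) z)
      = contract (fun a b c => Γ z.1 a c b) (hcv (V z)) (vcvstar Γ z (U z)) l
        - contract (fun a b c => Γ z.1 a c b) (hcv (U z)) (vcvstar Γ z (V z)) l
        + ∑ i, ∑ j, hcv (U z) i * hcv (V z) j * ∑ r, z.2 r * curv Γ z.1 i j l r := by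
  simp only [act_eq_sum_frame Γ U, act_eq_sum_frame Γ V, act_VV_cstar Γ hΓ, contract,
    ← act_XHstar_cstar_sub_act_XHstar_cstar Γ hΓ, mul_add, mul_sub, Finset.mul_sum,
    Finset.sum_add_distrib, Finset.sum_sub_distrib]
  rw [Finset.sum_comm (f := fun i j => hcv (V z) i * (hcv (U z) j * _))]
  simp only [mul_left_comm (hcv (V z) _) (hcv (U z) _), mul_assoc]
  ring

theorem vcvstar_lie {U V : Tot n → Tot n} {z : Tot n}
    (hΓ : ∀ i j k, DifferentiableAt ℝ (fun x => Γ x i j k) z.1)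
    (hU : DifferentiableAt ℝ U z) (hV : DifferentiableAt ℝ V z) :
    vcvstar Γ z (lie U V z)
      = vertDeriv Γ U V z - vertDeriv Γ V U z
        + contract (fun a b c => Γ z.1 a c b) (hcv (V z)) (vcvstar Γ z (U z))
        - contract (fun a b c => Γ z.1 a c b) (hcv (U z)) (vcvstar Γ z (V z))
        + fun l => ∑ i, ∑ j, hcv (U z) i * hcv (V z) j * ∑ r, z.2 r * curv Γ z.1 i j l r := by
  ext l
  have hbracket := sum_hcv_mul_act_cstar_sub Γ hΓ U V l
  rw [Finset.sum_sub_distrib] at hbracket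
  rw [vertDeriv_eq Γ hΓ hV, vertDeriv_eq Γ hΓ hU, lie, vcvstar_sub]
  simp only [Pi.add_apply, Pi.sub_apply]
  linear_combination hbracket

theorem hcv_torsion {U V : Tot n → Tot n} {z : Tot n}
    (hU : DifferentiableAt ℝ U z) (hV : DifferentiableAt ℝ V z) :
    hcv (tconnStar Γ h hinv U V z - tconnStar Γ h hinv V U z - lie U V z)
      = contract (Γ z.1) (hcv (U z)) (hcv (V z)) - contract (Γ z.1) (hcv (V z)) (hcv (U z)) := by
  change hcv (tconnStar Γ h hinv U V z) - hcv (tconnStar Γ h hinv V U z) - hcv (lie U V z) = _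
  rw [hcv_tconnStar, hcv_tconnStar, hcv_lie hU hV]
  abel

theorem vcvstar_torsion {U V : Tot n → Tot n} {z : Tot n}
    (hΓ : ∀ i j k, DifferentiableAt ℝ (fun x => Γ x i j k) z.1)
    (hU : DifferentiableAt ℝ U z) (hV : DifferentiableAt ℝ V z) :
    vcvstar Γ z (tconnStar Γ h hinv U V z - tconnStar Γ h hinv V U z - lie U V z)
      = contract (Cstar Γ h hinv z.1) (hcv (U z)) (vcvstar Γ z (V z))
        - contract (Cstar Γ h hinv z.1) (hcv (V z)) (vcvstar Γ z (U z))
        + contract (fun a b c => Γ z.1 a c b) (hcv (U z)) (vcvstar Γ z (V z))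
        - contract (fun a b c => Γ z.1 a c b) (hcv (V z)) (vcvstar Γ z (U z))
        - fun l => ∑ i, ∑ j, hcv (U z) i * hcv (V z) j * ∑ r, z.2 r * curv Γ z.1 i j l r := by
  rw [vcvstar_sub, vcvstar_sub, vcvstar_tconnStar, vcvstar_tconnStar, vcvstar_lie Γ hΓ hU hV]
  abel

theorem dotProduct_contract (T : Fin n → Fin n → Fin n → ℝ) (u α w : Fin n → ℝ) :
    α ⬝ᵥ contract T u w = contract (fun a b c => T a c b) u α ⬝ᵥ w := by
  simp only [dotProduct, contract, Finset.mul_sum, Finset.sum_mul]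
  rw [Finset.sum_comm]
  conv_rhs => rw [Finset.sum_comm]
  refine Finset.sum_congr rfl fun a _ => ?_
  rw [Finset.sum_comm]
  exact Finset.sum_congr rfl fun _ _ => Finset.sum_congr rfl fun _ _ => by ring

theorem dotProduct_contract_comm {T : Fin n → Fin n → Fin n → ℝ}
    (hT : ∀ a b c, T a b c = T c b a) (u v β : Fin n → ℝ) :
    v ⬝ᵥ contract T u β = u ⬝ᵥ contract T v β := by
  simp only [dotProduct, contract, Finset.mul_sum]
  rw [Finset.sum_comm]
  refine Finset.sum_congr rfl fun a _ => Finset.sum_congr rfl fun l _ =>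
    Finset.sum_congr rfl fun b _ => ?_
  rw [hT]
  ring

theorem dnabla_eq (x : Pt n) (i j k : Fin n) :
    dnabla Γ h x i j k
      = pd i (fun x' => h x' j k) x - pd j (fun x' => h x' i k) x
        - ∑ l, Γ x i k l * h x j l + ∑ l, Γ x j k l * h x i l := by
  simp only [dnabla, covh, sub_mul, Finset.sum_sub_distrib]
  ring

theorem sum_pd_hinv_mul {x : Pt n} (hh : ∀ i j, DifferentiableAt ℝ (fun x => h x i j) x)
    (hhinv : ∀ i j, DifferentiableAt ℝ (fun x => hinv x i j) x)
    (hleft : ∀ x i j, ∑ k, hinv x i k * h x k j = if i = j then (1 : ℝ) else 0)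
    (i j b : Fin n) :
    ∑ k, pd i (fun x' => hinv x' j k) x * h x k b
      = -∑ k, hinv x j k * pd i (fun x' => h x' k b) x := by
  have hconst : pd i (fun x' => ∑ k, hinv x' j k * h x' k b) x = 0 := by
    simp [hleft, pd]
  rw [pd, fderiv_fun_sum (fun k _ => by fun_prop), sum_apply] at hconst
  simp only [fderiv_fun_mul (hhinv _ _) (hh _ _), add_apply, smul_apply, smul_eq_mul,
    Finset.sum_add_distrib, mul_comm (h x _ b)] at hconst
  simp only [pd]
  linear_combination hconst

theorem pd_of_symm {x : Pt n} (σ : ℝ) (hs : ∀ x a b, h x a b = σ * h x b a)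
    (hh : ∀ i j, DifferentiableAt ℝ (fun x => h x i j) x) (i a b : Fin n) :
    pd i (fun x' => h x' a b) x = σ * pd i (fun x' => h x' b a) x := by
  simp only [pd, hs _ a b, fderiv_const_mul (hh b a), smul_apply, smul_eq_mul]

theorem Cstar_eq {x : Pt n} (σ : ℝ) (hs : ∀ x a b, h x a b = σ * h x b a)
    (hh : ∀ i j, DifferentiableAt ℝ (fun x => h x i j) x)
    (hhinv : ∀ i j, DifferentiableAt ℝ (fun x => hinv x i j) x)
    (hleft : ∀ x i j, ∑ k, hinv x i k * h x k j = if i = j then (1 : ℝ) else 0)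
    (i j r : Fin n) :
    Cstar Γ h hinv x i j r
      = σ * ∑ a, hinv x j a * (∑ k, Γ x i a k * h x k r - pd i (fun x' => h x' a r) x) := by
  calc Cstar Γ h hinv x i j r
      = σ * (∑ k, pd i (fun x' => hinv x' j k) x * h x k r
          + ∑ k, ∑ a, hinv x j a * Γ x i a k * h x k r) := by
        simp only [Cstar, hs x r, add_mul, Finset.sum_mul, Finset.sum_add_distrib,
          mul_left_comm _ σ, ← Finset.mul_sum, mul_add]
    _ = σ * (-∑ a, hinv x j a * pd i (fun x' => h x' a r) x
          + ∑ a, hinv x j a * ∑ k, Γ x i a k * h x k r) := by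
        rw [sum_pd_hinv_mul h hinv hh hhinv hleft, Finset.sum_comm]
        simp only [Finset.mul_sum, mul_assoc]
    _ = _ := by
        simp only [mul_sub, Finset.sum_sub_distrib]
        ring

theorem Cstar_symm (σ : ℝ) (hs : ∀ x a b, h x a b = σ * h x b a) {x : Pt n}
    (hqs : ∀ i j k, dnabla Γ h x i j k = 0)
    (hh : ∀ i j, DifferentiableAt ℝ (fun x => h x i j) x)
    (hhinv : ∀ i j, DifferentiableAt ℝ (fun x => hinv x i j) x)
    (hleft : ∀ x i j, ∑ k, hinv x i k * h x k j = if i = j then (1 : ℝ) else 0)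
    (i j r : Fin n) : Cstar Γ h hinv x i j r = Cstar Γ h hinv x r j i := by
  rw [Cstar_eq Γ h hinv σ hs hh hhinv hleft, Cstar_eq Γ h hinv σ hs hh hhinv hleft,
    Finset.mul_sum, Finset.mul_sum]
  refine Finset.sum_congr rfl fun a _ => ?_
  have hq := hqs i r a
  rw [dnabla_eq, pd_of_symm h σ hs hh i r a, pd_of_symm h σ hs hh r i a] at hq
  simp only [hs x r, hs x i, mul_left_comm _ σ, ← Finset.mul_sum] at hq
  linear_combination (-hinv x j a) * hq

theorem dTensor_tconnStar_pwStar (ε : ℝ) {U V W : Tot n → Tot n} {z : Tot n}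
    (hΓ : ∀ i j k, DifferentiableAt ℝ (fun x => Γ x i j k) z.1)
    (hC : ∀ i j r, Cstar Γ h hinv z.1 i j r = Cstar Γ h hinv z.1 r j i)
    (hflat : ∀ i j k l, curv Γ z.1 i j k l = 0)
    (hU : DifferentiableAt ℝ U z) (hV : DifferentiableAt ℝ V z) (hW : DifferentiableAt ℝ W z) :
    dTensor (tconnStar Γ h hinv) (pwStar Γ ε) U V W z = 0 := by
  have hcurv : (fun l => ∑ i, ∑ j, hcv (U z) i * hcv (V z) j * ∑ r, z.2 r * curv Γ z.1 i j l r)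
      = 0 := by
    ext
    simp [hflat]
  rw [dTensor, covDeriv_pwStar Γ h hinv ε hΓ hV hW, covDeriv_pwStar Γ h hinv ε hΓ hU hW]
  simp only [pwStar_eq_dotProduct]
  rw [hcv_torsion Γ h hinv hU hV, vcvstar_torsion Γ h hinv hΓ hU hV, hcurv]
  simp only [sub_zero, sub_dotProduct, add_dotProduct]
  rw [dotProduct_contract (Γ z.1) (hcv (U z)), dotProduct_contract (Γ z.1) (hcv (V z)),
    dotProduct_contract_comm hC (hcv (U z))]
  ring

theorem statement16_general {n : ℕ} (Γ : Pt n → Fin n → Fin n → Fin n → ℝ)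
    (h hinv : Pt n → Fin n → Fin n → ℝ)
    (hsmoothΓ : ∀ i j k, Smooth fun x => Γ x i j k)
    (hsmoothh : ∀ i j, Smooth fun x => h x i j)
    (hsmoothhinv : ∀ i j, Smooth fun x => hinv x i j)
    (hleft : ∀ x i j, ∑ k, hinv x i k * h x k j = if i = j then (1 : ℝ) else 0)
    (hqs : ∀ x i j k, dnabla Γ h x i j k = 0)
    (hflat : ∀ x i j k l, curv Γ x i j k l = 0) :
    ((∀ x i j, h x i j = h x j i) →
      ∀ U V W : Tot n → Tot n, Smooth U → Smooth V → Smooth W → ∀ z,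
        dTensor (tconnStar Γ h hinv) (pwStar Γ 1) U V W z = 0) ∧
    ((∀ x i j, h x i j = - h x j i) →
      ∀ U V W : Tot n → Tot n, Smooth U → Smooth V → Smooth W → ∀ z,
        dTensor (tconnStar Γ h hinv) (pwStar Γ (-1)) U V W z = 0) := by
  have key (σ : ℝ) (hs : ∀ x a b, h x a b = σ * h x b a) (U V W : Tot n → Tot n)
      (hU : Smooth U) (hV : Smooth V) (hW : Smooth W) (z : Tot n) :
      dTensor (tconnStar Γ h hinv) (pwStar Γ σ) U V W z = 0 :=
    dTensor_tconnStar_pwStar Γ h hinv σ (fun i j k => (hsmoothΓ i j k).differentiableAt)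
      (Cstar_symm Γ h hinv σ hs (hqs z.1) (fun i j => (hsmoothh i j).differentiableAt)
        (fun i j => (hsmoothhinv i j).differentiableAt) hleft)
      (hflat z.1) hU.differentiableAt hV.differentiableAt hW.differentiableAt
  exact ⟨fun hsym => key 1 (by simpa using hsym), fun hskew => key (-1) (by simpa using hskew)⟩

/-- if `(M, h, ∇)` is a quasi-statistical manifold with `∇` flat and `h`
symmetric (resp. skew-symmetric), then `(T*M, h̃_+, ∇̃)` (resp. `(T*M, h̃_-, ∇̃)`) is a
quasi-statistical manifold: `d^{∇̃} h̃_± = 0`. -/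
theorem statement16 {n : ℕ} (Γ : Pt n → Fin n → Fin n → Fin n → ℝ)
    (h hinv : Pt n → Fin n → Fin n → ℝ)
    (hsmoothΓ : ∀ i j k, Smooth fun x => Γ x i j k)
    (hsmoothh : ∀ i j, Smooth fun x => h x i j)
    (hsmoothhinv : ∀ i j, Smooth fun x => hinv x i j)
    (hleft : ∀ x i j, ∑ k, hinv x i k * h x k j = if i = j then (1 : ℝ) else 0)
    (hright : ∀ x i j, ∑ k, h x i k * hinv x k j = if i = j then (1 : ℝ) else 0)
    (hqs : ∀ x i j k, dnabla Γ h x i j k = 0)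
    (hflat : ∀ x i j k l, curv Γ x i j k l = 0) :
    ((∀ x i j, h x i j = h x j i) →
      ∀ U V W : Tot n → Tot n, Smooth U → Smooth V → Smooth W → ∀ z,
        dTensor (tconnStar Γ h hinv) (pwStar Γ 1) U V W z = 0) ∧
    ((∀ x i j, h x i j = - h x j i) →
      ∀ U V W : Tot n → Tot n, Smooth U → Smooth V → Smooth W → ∀ z,
        dTensor (tconnStar Γ h hinv) (pwStar Γ (-1)) U V W z = 0) :=
  statement16_general Γ h hinv hsmoothΓ hsmoothh hsmoothhinv hleft hqs hflat

end GQSCoord
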